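/- The derivative ξ₁' is strictly decreasing on the interval [0, 0.046], and for every real ζ with 0 ≤ ζ ≤ 0.046 one has −0.91445 ≤ ξ₁'(ζ) ≤ 0.31359. -/

import Mathlib

/-!
`ξ₁' = (-b' - (√Δ)')/(2a)` with `b'` constant, and `Δ` is a quadratic with positive leading
coefficient and negative discriminant, so `√Δ` is strictly convex:
`(√q)'' = -discrim / (4 (√q)³) > 0`. Hence `ξ₁'` is strictly decreasing on all of `ℝ`, and the
bounds are its values at the two endpoints.
-/

/-- The coefficient `b(ζ)` (with `χ = 0.454`). -/
noncomputable def bcoef (ζ : ℝ) : ℝ := -0.18 * 0.454 + 0.09 * ζ - 2.337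

/-- The coefficient `c(ζ)` (with `χ = 0.454`). -/
noncomputable def ccoef (ζ : ℝ) : ℝ :=
  16 * 0.454 ^ 2 - 32 * ζ ^ 2 - 16 * 0.454 + 8 * ζ - 16 * 0.454 * ζ + 4

/-- The discriminant `Δ(ζ) = b(ζ)² − 4ac(ζ)` with `a = 2.382`. -/
noncomputable def Δcoef (ζ : ℝ) : ℝ := (bcoef ζ) ^ 2 - 4 * 2.382 * (ccoef ζ)

/-- The root `ξ₁(ζ) = (−b(ζ) − √Δ(ζ)) / (2a)` with `a = 2.382`. -/
noncomputable def xi1 (ζ : ℝ) : ℝ := (-(bcoef ζ) - Real.sqrt (Δcoef ζ)) / (2 * 2.382)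

section SqrtQuadratic

variable {A B C : ℝ}

theorem quadratic_pos_of_discrim_neg (hA : 0 < A) (hdisc : discrim A B C < 0) (z : ℝ) :
    0 < A * z ^ 2 + B * z + C := by
  rw [discrim] at hdisc
  have hsq : 4 * A * (A * z ^ 2 + B * z + C) = (2 * A * z + B) ^ 2 - (B ^ 2 - 4 * A * C) := by
    ring
  nlinarith [sq_nonneg (2 * A * z + B)]

theorem hasDerivAt_sqrt_quadratic {z : ℝ} (hq : 0 < A * z ^ 2 + B * z + C) :
    HasDerivAt (fun z => √(A * z ^ 2 + B * z + C))
      ((2 * A * z + B) / (2 * √(A * z ^ 2 + B * z + C))) z := by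
  have hpoly : HasDerivAt (fun z => A * z ^ 2 + B * z + C) (2 * A * z + B) z := by
    refine (((((hasDerivAt_id' z).pow 2).const_mul A).add
      ((hasDerivAt_id' z).const_mul B)).add_const C).congr_deriv ?_
    ring
  exact hpoly.sqrt hq.ne'

theorem strictMono_deriv_sqrt_quadratic (hA : 0 < A) (hdisc : discrim A B C < 0) :
    StrictMono fun z => (2 * A * z + B) / (2 * √(A * z ^ 2 + B * z + C)) := by
  refine strictMono_of_hasDerivAt_pos
    (f' := fun z => -discrim A B C / (4 * √(A * z ^ 2 + B * z + C) ^ 3)) (fun z => ?_) (fun z => ?_)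
  · have hq := quadratic_pos_of_discrim_neg hA hdisc z
    have hs : 0 < √(A * z ^ 2 + B * z + C) := Real.sqrt_pos.mpr hq
    have hlin : HasDerivAt (fun z => 2 * A * z + B) (2 * A) z := by
      simpa using ((hasDerivAt_id z).const_mul (2 * A)).add_const B
    refine (hlin.div ((hasDerivAt_sqrt_quadratic hq).const_mul 2) (by positivity)).congr_deriv ?_
    have hs2 := Real.sq_sqrt hq.le
    set s := √(A * z ^ 2 + B * z + C)
    rw [discrim]
    field_simp
    linear_combination 16 * A * hs2
  · have := Real.sqrt_pos.mpr (quadratic_pos_of_discrim_neg hA hdisc z)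
    have := neg_pos.mpr hdisc
    positivity

end SqrtQuadratic

theorem Δcoef_eq_quadratic (ζ : ℝ) :
    Δcoef ζ = 304.9041 * ζ ^ 2 + -7.4479776 * ζ + 5.5276264704 := by
  norm_num [Δcoef, bcoef, ccoef]
  ring

theorem discrim_Δcoef_neg : discrim (304.9041 : ℝ) (-7.4479776) 5.5276264704 < 0 := by
  norm_num [discrim]

theorem deriv_xi1 : deriv xi1 = fun ζ => (-0.09 - (2 * 304.9041 * ζ + -7.4479776) /
    (2 * √(304.9041 * ζ ^ 2 + -7.4479776 * ζ + 5.5276264704))) / (2 * 2.382) := by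
  funext ζ
  have hb : HasDerivAt bcoef 0.09 ζ := by
    refine ((((hasDerivAt_id' ζ).const_mul (0.09 : ℝ)).const_add _).sub_const _).congr_deriv ?_
    ring
  have hsqrt := hasDerivAt_sqrt_quadratic
    (quadratic_pos_of_discrim_neg (by norm_num) discrim_Δcoef_neg ζ)
  unfold xi1
  rw [funext Δcoef_eq_quadratic]
  exact ((hb.neg.sub hsqrt).div_const _).deriv

theorem strictAnti_deriv_xi1 : StrictAnti (deriv xi1) := by
  intro a b hab
  have := strictMono_deriv_sqrt_quadratic (by norm_num) discrim_Δcoef_neg hab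
  rw [deriv_xi1]
  dsimp only
  gcongr

theorem deriv_xi1_zero_le : deriv xi1 0 ≤ 0.31359 := by
  rw [deriv_xi1]
  dsimp only
  -- The bound is tight: it needs `√Δ(0) ≥ 2.3510880`, while `√Δ(0) = 2.3510904…`.
  have hs : 2.351089 ≤ √(304.9041 * 0 ^ 2 + -7.4479776 * 0 + 5.5276264704 : ℝ) :=
    Real.le_sqrt_of_sq_le (by norm_num)
  generalize √(304.9041 * 0 ^ 2 + -7.4479776 * 0 + 5.5276264704 : ℝ) = s at hs ⊢
  have hslope : -1.58394276 ≤ (2 * 304.9041 * 0 + -7.4479776) / (2 * s) := by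
    rw [le_div_iff₀ (by positivity)]
    linarith
  rw [div_le_iff₀ (by norm_num)]
  linarith

theorem le_deriv_xi1_right : -0.91445 ≤ deriv xi1 0.046 := by
  have hs : √5.8301965764 = 2.41458 := by
    rw [Real.sqrt_eq_iff_mul_self_eq] <;> norm_num
  rw [deriv_xi1]
  norm_num [hs]

theorem xi1_first_deriv_bounds :
    StrictAntiOn (deriv xi1) (Set.Icc (0 : ℝ) 0.046) ∧
      ∀ ζ ∈ Set.Icc (0 : ℝ) 0.046,
        -0.91445 ≤ deriv xi1 ζ ∧ deriv xi1 ζ ≤ 0.31359 :=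
  ⟨strictAnti_deriv_xi1.strictAntiOn _, fun _ hζ =>
    ⟨le_deriv_xi1_right.trans (strictAnti_deriv_xi1.antitone hζ.2),
      (strictAnti_deriv_xi1.antitone hζ.1).trans deriv_xi1_zero_le⟩⟩
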